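/- arXiv:1102.4225 — 2 statements merged into one kernel-verified Lean document; each statement's English description precedes it below -/
import Mathlib

section
/- If two equal-length words α of type 2(i)(i-1) and α' of type 2(j)(j-1) or 2(j)(j) are component-wise ~₁-equivalent and have different numbers of occurrences of s_gen or s_tr, then {type of α, type of α'} = {2(i)(i-1), 2(i)(i)} for some i ≥ 1. -/
/-!
The relation `~₁` preserves the number of `s_gen`s, and on both types that number is a strictly
increasing function of the exponent: `c (i - 1) + 1` for 2(i)(i-1) and `c i` for 2(i)(i), up to the
common contribution of `s_init`, where `c ∈ {1, 2}` counts `s_gen` in `[s_gen, s_tr]`. Two words of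
type 2(·)(·-1) therefore have the same exponent and hence the same counts of `s_gen` and `s_tr`,
which is excluded; for mixed types, `c (i - 1) + 1 = c j` forces `c = 1` and `i = j`.
-/

/-- `α` is of type 2(i)(i-1): `α = s_init (s_gen s_tr)^(i-1) s_gen β` with `β`
containing no `s_gen` or `s_tr`. -/
def TypeGenTr1 {S : Type*} (s_init s_gen s_tr : S) (i : ℕ) (α : List S) : Prop :=
  ∃ β : List S,
    α = s_init :: (List.flatten (List.replicate (i - 1) [s_gen, s_tr])) ++ s_gen :: β ∧
      s_gen ∉ β ∧ s_tr ∉ β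

/-- `α` is of type 2(i)(i): `α = s_init (s_gen s_tr)^i β` with `β` containing
no `s_gen` or `s_tr`. -/
def TypeGenTr2 {S : Type*} (s_init s_gen s_tr : S) (i : ℕ) (α : List S) : Prop :=
  ∃ β : List S,
    α = s_init :: (List.flatten (List.replicate i [s_gen, s_tr])) ++ β ∧
      s_gen ∉ β ∧ s_tr ∉ β

namespace List

variable {S : Type*} [DecidableEq S]

theorem Forall₂.count_eq {g : S} {l l' : List S}
    (h : Forall₂ (fun s s' => s = g ↔ s' = g) l l') : l.count g = l'.count g := by
  simpa only [count_eq_length_filter] using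
    (rel_filter (fun _ _ hab => by simpa using hab) h).length_eq

theorem count_flatten_replicate (x : S) (n : ℕ) (l : List S) :
    (replicate n l).flatten.count x = n * l.count x := by
  simp [count_flatten]

end List

section

variable {S : Type*} [DecidableEq S] {s_init s_gen s_tr x : S} {i : ℕ} {α : List S}

theorem TypeGenTr1.count_eq (h : TypeGenTr1 s_init s_gen s_tr i α) (hx : x = s_gen ∨ x = s_tr) :
    α.count x = [s_init].count x + (i - 1) * [s_gen, s_tr].count x + [s_gen].count x := by
  obtain ⟨β, rfl, hg, ht⟩ := h
  have : β.count x = 0 := List.count_eq_zero.mpr (by rcases hx with rfl | rfl <;> assumption)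
  simp [List.count_flatten_replicate, this, List.count_cons]
  omega

theorem TypeGenTr2.count_eq (h : TypeGenTr2 s_init s_gen s_tr i α) (hx : x = s_gen ∨ x = s_tr) :
    α.count x = [s_init].count x + i * [s_gen, s_tr].count x := by
  obtain ⟨β, rfl, hg, ht⟩ := h
  have : β.count x = 0 := List.count_eq_zero.mpr (by rcases hx with rfl | rfl <;> assumption)
  simp [List.count_flatten_replicate, this, List.count_cons]
  omega

end

theorem sim1_types_differ_by_one_general {S : Type*} [DecidableEq S]
    (s_init s_gen s_tr : S) (i j : ℕ) (hi : 1 ≤ i)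
    (α α' : List S)
    (hα : TypeGenTr1 s_init s_gen s_tr i α)
    (hα' : TypeGenTr1 s_init s_gen s_tr j α' ∨ TypeGenTr2 s_init s_gen s_tr j α')
    (hcount : α.count s_gen ≠ α'.count s_gen ∨ α.count s_tr ≠ α'.count s_tr)
    (hsim : List.Forall₂ (fun s s' => s = s_gen ↔ s' = s_gen) α α') :
    ∃ k : ℕ, 1 ≤ k ∧
      ((TypeGenTr1 s_init s_gen s_tr k α ∧ TypeGenTr2 s_init s_gen s_tr k α') ∨
       (TypeGenTr2 s_init s_gen s_tr k α ∧ TypeGenTr1 s_init s_gen s_tr k α')) := by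
  have hgen := hsim.count_eq
  rw [hα.count_eq (.inl rfl), List.count_singleton_self] at hgen
  have hc_pos : 0 < [s_gen, s_tr].count s_gen := List.count_pos_iff.mpr (by simp)
  have hc_le : [s_gen, s_tr].count s_gen ≤ 2 := List.count_le_length
  rcases hα' with hα' | hα'
  · have hij : i - 1 = j - 1 := by
      rw [hα'.count_eq (.inl rfl), List.count_singleton_self] at hgen
      exact Nat.eq_of_mul_eq_mul_right hc_pos (by omega)
    rw [hα.count_eq (.inl rfl), hα'.count_eq (.inl rfl), hα.count_eq (.inr rfl),
      hα'.count_eq (.inr rfl), hij] at hcount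
    simp at hcount
  · have hij : i = j := by
      rw [hα'.count_eq (.inl rfl)] at hgen
      interval_cases [s_gen, s_tr].count s_gen <;> omega
    exact ⟨i, hi, .inl ⟨hα, hij ▸ hα'⟩⟩

/-- Claim 1(3): if two equal-length words, one of type 2(i)(i-1) and the other
of type 2(j)(j-1) or 2(j)(j), are component-wise `∼₁`-equivalent (`s ∼₁ s'` iff
(`s = s_gen` ⟺ `s' = s_gen`)) and have different numbers of occurrences of
`s_gen` or of `s_tr`, then `{type of α, type of α'} = {2(k)(k-1), 2(k)(k)}`
for some `k ≥ 1`. -/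
theorem sim1_types_differ_by_one {S : Type*} [DecidableEq S]
    (s_init s_gen s_tr : S) (i j : ℕ) (hi : 1 ≤ i) (hj : 1 ≤ j)
    (α α' : List S)
    (hα : TypeGenTr1 s_init s_gen s_tr i α)
    (hα' : TypeGenTr1 s_init s_gen s_tr j α' ∨ TypeGenTr2 s_init s_gen s_tr j α')
    (hlen : α.length = α'.length)
    (hcount : α.count s_gen ≠ α'.count s_gen ∨ α.count s_tr ≠ α'.count s_tr)
    (hsim : List.Forall₂ (fun s s' => s = s_gen ↔ s' = s_gen) α α') :
    ∃ k : ℕ, 1 ≤ k ∧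
      ((TypeGenTr1 s_init s_gen s_tr k α ∧ TypeGenTr2 s_init s_gen s_tr k α') ∨
       (TypeGenTr2 s_init s_gen s_tr k α ∧ TypeGenTr1 s_init s_gen s_tr k α')) :=
  sim1_types_differ_by_one_general s_init s_gen s_tr i j hi α α' hα hα' hcount hsim
end

section
/- A word of type 2(i)(i-1) and a word of type 2(j)(j-1) with i ≠ j cannot be component-wise ~₁-equivalent (they differ at the position of the max(i,j)-th occurrence of s_gen whenever they have equal length, or trivially if lengths differ). -/
/-! `∼₁`-equivalent words contain `s_gen` equally often, while a word of type 2(i)(i-1)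
contains it exactly `i` times. -/

theorem List.Forall₂.count_eq_s8 {S T : Type*} [DecidableEq S] [DecidableEq T] {x : S} {y : T}
    {l : List S} {l' : List T} (h : List.Forall₂ (fun a b => a = x ↔ b = y) l l') :
    l.count x = l'.count y := by
  induction h with
  | nil => rfl
  | @cons a b _ _ hab _ ih =>
    by_cases ha : a = x
    · simp [ha, hab.mp ha, ih]
    · simp [ha, mt hab.mpr ha, ih]

theorem List.count_flatten_replicate_pair {S : Type*} [DecidableEq S] {g t : S} (hgt : g ≠ t)
    (n : ℕ) : (List.replicate n [g, t]).flatten.count g = n := by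
  simp [List.count_flatten, hgt.symm]

theorem TypeGenTr1.count_gen {S : Type*} [DecidableEq S] {s_init s_gen s_tr : S}
    (hig : s_init ≠ s_gen) (hgt : s_gen ≠ s_tr) {i : ℕ} (hi : 1 ≤ i) {α : List S}
    (hα : TypeGenTr1 s_init s_gen s_tr i α) : α.count s_gen = i := by
  obtain ⟨β, rfl, hβ, -⟩ := hα
  rw [List.cons_append, List.count_cons_of_ne hig, List.count_append,
    List.count_flatten_replicate_pair hgt, List.count_cons_self, List.count_eq_zero.mpr hβ]
  omega

theorem distinct_gen_counts_not_sim1_general {S : Type*}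
    (s_init s_gen s_tr : S)
    (hd1 : s_init ≠ s_gen) (hd3 : s_gen ≠ s_tr)
    (i j : ℕ) (hi : 1 ≤ i) (hj : 1 ≤ j) (hij : i ≠ j)
    (α α' : List S)
    (hα : TypeGenTr1 s_init s_gen s_tr i α)
    (hα' : TypeGenTr1 s_init s_gen s_tr j α') :
    ¬ List.Forall₂ (fun s s' => s = s_gen ↔ s' = s_gen) α α' := by
  classical
  intro hsim
  apply hij
  rw [← hα.count_gen hd1 hd3 hi, ← hα'.count_gen hd1 hd3 hj]
  exact hsim.count_eq_s8

/-- A word of type 2(i)(i-1) and a word of type 2(j)(j-1) with `i ≠ j` cannot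
be component-wise `∼₁`-equivalent, where `s ∼₁ s'` iff
(`s = s_gen` ⟺ `s' = s_gen`) and `s_init`, `s_gen`, `s_tr` are pairwise
distinct. -/
theorem distinct_gen_counts_not_sim1 {S : Type*}
    (s_init s_gen s_tr : S)
    (hd1 : s_init ≠ s_gen) (hd2 : s_init ≠ s_tr) (hd3 : s_gen ≠ s_tr)
    (i j : ℕ) (hi : 1 ≤ i) (hj : 1 ≤ j) (hij : i ≠ j)
    (α α' : List S)
    (hα : TypeGenTr1 s_init s_gen s_tr i α)
    (hα' : TypeGenTr1 s_init s_gen s_tr j α') :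
    ¬ List.Forall₂ (fun s s' => s = s_gen ↔ s' = s_gen) α α' :=
  distinct_gen_counts_not_sim1_general s_init s_gen s_tr hd1 hd3 i j hi hj hij α α' hα hα'
end
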